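/- arXiv:2106.00621 — 3 statements merged into one kernel-verified Lean document; each statement's English description precedes it below -/
import Mathlib

section
/- Let 0 < θ ≤ p < ∞, α₁, α₂ ∈ ℝ, σ₁ = θ(p/θ)', σ₂ ≥ p, and let {t_k} be a p-admissible weight sequence in Ẋ_{α,σ,p}. Then α₂ ≥ α₁. -/
open MeasureTheory ENNReal Filter
open scoped ENNReal Topology

noncomputable section

/-- Axis-parallel cube in `ℝⁿ` with lower-left corner `a` and side length `l`. -/
def Cube {n : ℕ} (a : Fin n → ℝ) (l : ℝ) : Set (Fin n → ℝ) :=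
  {x | ∀ i, a i ≤ x i ∧ x i < a i + l}

/-- `M_Q(f) = |Q|⁻¹ ∫_Q |f|` (in `ℝ≥0∞`). -/
def avg {n : ℕ} (Q : Set (Fin n → ℝ)) (f : (Fin n → ℝ) → ℝ) : ℝ≥0∞ :=
  (∫⁻ x in Q, ENNReal.ofReal |f x|) / volume Q

/-- `M_{Q,r}(f) = (|Q|⁻¹ ∫_Q |f|^r)^{1/r}` (in `ℝ≥0∞`). -/
def avgNorm {n : ℕ} (Q : Set (Fin n → ℝ)) (r : ℝ) (f : (Fin n → ℝ) → ℝ) : ℝ≥0∞ :=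
  ((∫⁻ x in Q, ENNReal.ofReal (|f x| ^ r)) / volume Q) ^ (1 / r)

/-- A weight: nonnegative, locally integrable, positive a.e. -/
structure IsWeight {n : ℕ} (γ : (Fin n → ℝ) → ℝ) : Prop where
  nonneg : ∀ x, 0 ≤ γ x
  locInt : LocallyIntegrable γ (volume : Measure (Fin n → ℝ))
  pos : ∀ᵐ x : Fin n → ℝ, 0 < γ x

/-- The `A_p` condition (`1 < p`) with a given constant `C`:
for every cube `Q`, `M_Q(γ) · M_{Q,p'/p}(γ⁻¹) ≤ C`, where `p'/p = 1/(p-1)`. -/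
def ApWith {n : ℕ} (p : ℝ) (C : ℝ≥0∞) (γ : (Fin n → ℝ) → ℝ) : Prop :=
  ∀ (a : Fin n → ℝ) (l : ℝ), 0 < l →
    avg (Cube a l) γ * avgNorm (Cube a l) (1 / (p - 1)) (fun x => (γ x)⁻¹) ≤ C

/-- Muckenhoupt class `A_p(ℝⁿ)` for `1 < p < ∞`. -/
def MuckenhouptAp {n : ℕ} (p : ℝ) (γ : (Fin n → ℝ) → ℝ) : Prop :=
  ∃ C : ℝ≥0∞, 0 < C ∧ C < ∞ ∧ ApWith p C γ

/-- Muckenhoupt class `A_1(ℝⁿ)`. -/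
def MuckenhouptA1 {n : ℕ} (γ : (Fin n → ℝ) → ℝ) : Prop :=
  ∃ C : ℝ≥0∞, 0 < C ∧ C < ∞ ∧ ∀ (a : Fin n → ℝ) (l : ℝ), 0 < l →
    ∀ᵐ y : Fin n → ℝ, y ∈ Cube a l → avg (Cube a l) γ ≤ C * ENNReal.ofReal (γ y)

/-- Muckenhoupt class `A_p(ℝⁿ)` for `1 ≤ p < ∞`. -/
def MuckenhouptA {n : ℕ} (p : ℝ) (γ : (Fin n → ℝ) → ℝ) : Prop :=
  if p = 1 then MuckenhouptA1 γ else MuckenhouptAp p γ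

/-- Hardy–Littlewood maximal function over axis-parallel cubes. -/
def maximal {n : ℕ} (f : (Fin n → ℝ) → ℝ) (x : Fin n → ℝ) : ℝ≥0∞ :=
  ⨆ (a : Fin n → ℝ) (l : ℝ) (_ : 0 < l) (_ : x ∈ Cube a l), avg (Cube a l) f

/-- The conjugate exponent `r' = r/(r-1)`. -/
def conjExp (r : ℝ) : ℝ := r / (r - 1)

/-- `‖{F_k}| L_p(ℓ_q)‖` for `0 < p,q < ∞`, for `ℝ≥0∞`-valued functions. -/
def LpLqNorm {n : ℕ} (p q : ℝ) (F : ℤ → (Fin n → ℝ) → ℝ≥0∞) : ℝ≥0∞ :=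
  (∫⁻ x, (∑' k : ℤ, F k x ^ q) ^ (p / q)) ^ (1 / p)

/-- A `p`-admissible weight sequence: each `t_k ∈ L_p^loc(ℝⁿ)`. -/
def pAdmissible {n : ℕ} (p : ℝ) (t : ℤ → (Fin n → ℝ) → ℝ) : Prop :=
  ∀ k : ℤ, LocallyIntegrable (fun x => |t k x| ^ p) (volume : Measure (Fin n → ℝ))

/-- The first condition in the definition of `Ẋ_{α,σ,p}` (Asum1), with constant `C₁`. -/
def Asum1 {n : ℕ} (α₁ σ₁ p : ℝ) (C₁ : ℝ) (t : ℤ → (Fin n → ℝ) → ℝ) : Prop :=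
  ∀ k j : ℤ, k ≤ j → ∀ (a : Fin n → ℝ) (l : ℝ), 0 < l →
    avgNorm (Cube a l) p (t k) * avgNorm (Cube a l) σ₁ (fun x => (t j x)⁻¹)
      ≤ ENNReal.ofReal (C₁ * 2 ^ (α₁ * ((k : ℝ) - (j : ℝ))))

/-- The second condition in the definition of `Ẋ_{α,σ,p}` (Asum2), with constant `C₂`. -/
def Asum2 {n : ℕ} (α₂ σ₂ p : ℝ) (C₂ : ℝ) (t : ℤ → (Fin n → ℝ) → ℝ) : Prop :=
  ∀ k j : ℤ, k ≤ j → ∀ (a : Fin n → ℝ) (l : ℝ), 0 < l →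
    (avgNorm (Cube a l) p (t k))⁻¹ * avgNorm (Cube a l) σ₂ (t j)
      ≤ ENNReal.ofReal (C₂ * 2 ^ (α₂ * ((j : ℝ) - (k : ℝ))))

/-- The weight class `Ẋ_{α,σ,p}`. -/
def XClass {n : ℕ} (α₁ α₂ σ₁ σ₂ p : ℝ) (t : ℤ → (Fin n → ℝ) → ℝ) : Prop :=
  pAdmissible p t ∧
    (∃ C₁ : ℝ, 0 < C₁ ∧ Asum1 α₁ σ₁ p C₁ t) ∧
    (∃ C₂ : ℝ, 0 < C₂ ∧ Asum2 α₂ σ₂ p C₂ t)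

/-- The dyadic cube `Q_{v,m} = 2^{-v}([0,1)ⁿ + m)`. -/
def dyadicCube {n : ℕ} (v : ℤ) (m : Fin n → ℤ) : Set (Fin n → ℝ) :=
  {x | ∀ i, (m i : ℝ) * (2 : ℝ) ^ (-v) ≤ x i ∧ x i < ((m i : ℝ) + 1) * (2 : ℝ) ^ (-v)}

/-- The cube `3Q_{v,m}`, concentric with `Q_{v,m}` with triple side length. -/
def tripleDyadic {n : ℕ} (v : ℤ) (m : Fin n → ℤ) : Set (Fin n → ℝ) :=
  {x | ∀ i, ((m i : ℝ) - 1) * (2 : ℝ) ^ (-v) ≤ x i ∧ x i < ((m i : ℝ) + 2) * (2 : ℝ) ^ (-v)}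

/-- `t_{k,m} = ‖t_k | L_p(Q_{k,m})‖` in `ℝ≥0∞`. -/
def tkm {n : ℕ} (p : ℝ) (t : ℤ → (Fin n → ℝ) → ℝ) (k : ℤ) (m : Fin n → ℤ) : ℝ≥0∞ :=
  (∫⁻ x in dyadicCube k m, ENNReal.ofReal (|t k x| ^ p)) ^ (1 / p)

/-- The quasi-norm of the sequence space `ḟ_{p,q}(ℝⁿ, {t_k})`. -/
def fNorm {n : ℕ} (p q : ℝ) (t : ℤ → (Fin n → ℝ) → ℝ)
    (lam : ℤ → (Fin n → ℤ) → ℂ) : ℝ≥0∞ :=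
  (∫⁻ x, (∑' k : ℤ, ∑' m : Fin n → ℤ,
      (ENNReal.ofReal ((2 : ℝ) ^ ((k : ℝ) * n * q / 2)) *
        ENNReal.ofReal (t k x) ^ q * ENNReal.ofReal (‖lam k m‖) ^ q) *
        (dyadicCube k m).indicator (fun _ => (1 : ℝ≥0∞)) x) ^ (p / q)) ^ (1 / p)

def lqNorm (q : ℝ≥0∞) (g : ℤ → ℝ≥0∞) : ℝ≥0∞ :=
  if q = ∞ then ⨆ k, g k else (∑' k : ℤ, g k ^ q.toReal) ^ (1 / q.toReal)

def lpNorm {n : ℕ} (p : ℝ≥0∞) (g : (Fin n → ℝ) → ℝ≥0∞) : ℝ≥0∞ :=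
  if p = ∞ then essSup g volume else (∫⁻ x, g x ^ p.toReal) ^ (1 / p.toReal)

/-- `λ*_{k,m,p,d} = (∑_{h∈ℤⁿ} |λ_{k,h}|^p / (1+|h-m|)^d)^{1/p}`. -/
def lamStar {n : ℕ} (p d : ℝ) (lam : ℤ → (Fin n → ℤ) → ℂ) (k : ℤ) (m : Fin n → ℤ) : ℝ :=
  (∑' h : Fin n → ℤ, ‖lam k h‖ ^ p /
      (1 + Real.sqrt (∑ i, ((h i : ℝ) - (m i : ℝ)) ^ 2)) ^ d) ^ (1 / p)

end

/-!
Multiplying the two defining inequalities for `k ≤ j = 0` cancels `M_{Q,p}(t_k)` and leaves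
`M_{Q,σ₁}(t₀⁻¹) · M_{Q,σ₂}(t₀) ≤ C₁ C₂ 2^{(α₂ - α₁)(-k)}`. The left side does not depend on `k`
and is positive, because `t₀ > 0` a.e. and `σ₁, σ₂ ≥ 0` (for `θ = p` the junk value
`conjExp 1 = 0` gives `σ₁ = 0`, and `M_{Q,0} ≡ 1`). Letting `k → -∞` forces `α₂ ≥ α₁`.
-/

lemma volume_cube {n : ℕ} (a : Fin n → ℝ) (l : ℝ) :
    volume (Cube a l) = ENNReal.ofReal l ^ n := by
  have : Cube a l = Set.univ.pi fun i => Set.Ico (a i) (a i + l) := by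
    ext x; simp [Cube, Set.mem_pi]
  simp [this, volume_pi_pi, Real.volume_Ico]

lemma conjExp_nonneg {r : ℝ} (hr : 1 ≤ r) : 0 ≤ conjExp r :=
  div_nonneg (by linarith) (by linarith)

lemma pAdmissible.aemeasurable_abs {n : ℕ} {p : ℝ} {t : ℤ → (Fin n → ℝ) → ℝ}
    (ht : pAdmissible p t) (hp : p ≠ 0) (k : ℤ) : AEMeasurable (fun x => |t k x|) := by
  refine ((ht k).aestronglyMeasurable.aemeasurable.pow_const (1 / p)).congr
    (.of_forall fun x => ?_)
  dsimp only
  rw [← Real.rpow_mul (abs_nonneg _), mul_one_div_cancel hp, Real.rpow_one]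

lemma avgNorm_pos {n : ℕ} {Q : Set (Fin n → ℝ)} {r : ℝ} {f : (Fin n → ℝ) → ℝ} (hr : 0 ≤ r)
    (hQ₀ : volume Q ≠ 0) (hQ : volume Q ≠ ∞)
    (hfm : AEMeasurable (fun x => |f x|) (volume.restrict Q))
    (hf : ∀ᵐ x ∂volume.restrict Q, f x ≠ 0) : 0 < avgNorm Q r f := by
  rcases hr.eq_or_lt with rfl | hr
  · simp [avgNorm]
  have hint : ∫⁻ x in Q, ENNReal.ofReal (|f x| ^ r) ≠ 0 := by
    rw [Ne, lintegral_eq_zero_iff' (hfm.pow_const r).ennreal_ofReal]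
    intro h₀
    have hfalse : ∀ᵐ _ ∂volume.restrict Q, False := by
      filter_upwards [h₀, hf] with x h₀x hfx
      exact (Real.rpow_pos_of_pos (abs_pos.2 hfx) r).not_ge (ENNReal.ofReal_eq_zero.1 h₀x)
    exact hQ₀ (Measure.restrict_eq_zero.1 (ae_eq_bot.1 (eventually_false_iff_eq_bot.1 hfalse)))
  exact ENNReal.rpow_pos_of_nonneg (ENNReal.div_pos_iff.2 ⟨hint, hQ⟩) (by positivity)

lemma ENNReal.mul_le_mul_of_mul_le_of_inv_mul_le {a b c x y : ℝ≥0∞} (hx : x ≠ ∞) (hy : y ≠ ∞)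
    (hb : a * b ≤ x) (hc : a⁻¹ * c ≤ y) : b * c ≤ x * y := by
  rcases eq_or_ne a 0 with rfl | ha₀
  · have : c = 0 := by
      by_contra hc₀
      exact hy (top_le_iff.1 (by simpa [ENNReal.top_mul hc₀] using hc))
    simp [this]
  rcases eq_or_ne a ∞ with rfl | ha
  · have : b = 0 := by
      by_contra hb₀
      exact hx (top_le_iff.1 (by simpa [ENNReal.top_mul hb₀] using hb))
    simp [this]
  calc b * c = (a * a⁻¹) * (b * c) := by rw [ENNReal.mul_inv_cancel ha₀ ha, one_mul]
    _ = (a * b) * (a⁻¹ * c) := by ring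
    _ ≤ x * y := mul_le_mul' hb hc

lemma nonneg_of_forall_le_ofReal_rpow_two {c : ℝ≥0∞} (hc : 0 < c) {C β : ℝ}
    (h : ∀ m : ℕ, c ≤ ENNReal.ofReal (C * 2 ^ (β * m))) : 0 ≤ β := by
  by_contra! hβ
  have hgeom : Tendsto (fun m : ℕ => ((2 : ℝ) ^ β) ^ m) atTop (𝓝 0) :=
    tendsto_pow_atTop_nhds_zero_of_lt_one (by positivity)
      (Real.rpow_lt_one_of_one_lt_of_neg one_lt_two hβ)
  have hlim : Tendsto (fun m : ℕ => ENNReal.ofReal (C * 2 ^ (β * m))) atTop (𝓝 0) := by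
    simpa [Real.rpow_mul, Real.rpow_natCast] using
      ENNReal.tendsto_ofReal (hgeom.const_mul C)
  exact hc.ne' (le_antisymm (ge_of_tendsto' hlim h) bot_le)

theorem alpha_two_ge_alpha_one_general (n : ℕ) (θ p α₁ α₂ σ₂ : ℝ)
    (hθ : 0 < θ) (hθp : θ ≤ p) (hσ₂ : p ≤ σ₂)
    (t : ℤ → (Fin n → ℝ) → ℝ) (hw : ∀ k, ∀ᵐ x : Fin n → ℝ, 0 < t k x)
    (ht : XClass α₁ α₂ (θ * conjExp (p / θ)) σ₂ p t) :
    α₁ ≤ α₂ := by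
  obtain ⟨hadm, ⟨C₁, hC₁, h₁⟩, ⟨C₂, -, h₂⟩⟩ := ht
  have hp : 0 < p := hθ.trans_le hθp
  set σ₁ := θ * conjExp (p / θ)
  set Q : Set (Fin n → ℝ) := Cube 0 1
  have hQ : volume Q = 1 := by simp [Q, volume_cube]
  have hw₀ : ∀ᵐ x ∂volume.restrict Q, t 0 x ≠ 0 :=
    ae_restrict_of_ae ((hw 0).mono fun _ hx => hx.ne')
  have hpos : 0 < avgNorm Q σ₁ (fun x => (t 0 x)⁻¹) * avgNorm Q σ₂ (t 0) := by
    have hm := (hadm.aemeasurable_abs hp.ne' 0).restrict (s := Q)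
    refine ENNReal.mul_pos (avgNorm_pos ?_ (by simp [hQ]) (by simp [hQ]) ?_ ?_).ne'
      (avgNorm_pos (by linarith) (by simp [hQ]) (by simp [hQ]) hm hw₀).ne'
    · exact mul_nonneg hθ.le (conjExp_nonneg ((one_le_div hθ).2 hθp))
    · exact hm.inv.congr (.of_forall fun x => (abs_inv (t 0 x)).symm)
    · simpa only [ne_eq, inv_eq_zero] using hw₀
  suffices 0 ≤ α₂ - α₁ by linarith
  refine nonneg_of_forall_le_ofReal_rpow_two hpos (C := C₁ * C₂) fun m => ?_
  have hk : -(m : ℤ) ≤ 0 := by omega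
  refine (ENNReal.mul_le_mul_of_mul_le_of_inv_mul_le ENNReal.ofReal_ne_top ENNReal.ofReal_ne_top
    (h₁ _ _ hk 0 1 one_pos) (h₂ _ _ hk 0 1 one_pos)).trans_eq ?_
  rw [← ENNReal.ofReal_mul (by positivity)]
  congr 1
  push_cast
  rw [show (α₂ - α₁) * m = α₁ * (-m - 0) + α₂ * (0 - -m) by ring, Real.rpow_add two_pos]
  ring

/-- for `{t_k} ∈ Ẋ_{α,σ,p}` with `σ₁ = θ(p/θ)'` and `σ₂ ≥ p`, one has `α₂ ≥ α₁`. -/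
theorem alpha_two_ge_alpha_one (n : ℕ) (hn : 0 < n) (θ p α₁ α₂ σ₂ : ℝ)
    (hθ : 0 < θ) (hθp : θ ≤ p) (hσ₂ : p ≤ σ₂)
    (t : ℤ → (Fin n → ℝ) → ℝ) (hw : ∀ k, ∀ᵐ x : Fin n → ℝ, 0 < t k x)
    (ht : XClass α₁ α₂ (θ * conjExp (p / θ)) σ₂ p t) :
    α₁ ≤ α₂ :=
  alpha_two_ge_alpha_one_general n θ p α₁ α₂ σ₂ hθ hθp hσ₂ t hw ht
end

section
/- Fefferman–Stein dual maximal inequality: Let 1 < p < ∞. There exists a constant c such that for all nonnegative measurable functions f and g on ℝⁿ, ∫_{ℝⁿ} (M f(x))^p g(x) dx ≤ c ∫_{ℝⁿ} f(x)^p (M g)(x) dx, where M is the Hardy–Littlewood maximal operator over cubes. -/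
open MeasureTheory ENNReal Filter
open scoped ENNReal Topology

/-!
The proof is a Marcinkiewicz-type interpolation. Selecting, by the Vitali covering lemma, a
disjoint subfamily of the cubes `Q` with `⨍_Q |f| > t`, and bounding the `g dx`-measure of
`5Q` by `5ⁿ |Q| · M g(y)` for every `y ∈ Q`, gives the weighted weak-type estimate
`t · (g dx){M f > t} ≤ 5ⁿ ∫ |f| · M g`. Applied to the part of `f` where `|f| > t/2` it gives
`t · (g dx){M f > t} ≤ 2 · 5ⁿ ∫_{|f| > t/2} |f| · M g`, and integrating this against
`p t^(p-1) dt` (the layer cake formula, for the measures `g dx` and `|f| · M g dx`) yields the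
strong estimate with constant `2^p 5ⁿ p / (p - 1)`.
-/

open Set Metric

namespace FeffermanStein

variable {n : ℕ}

lemma cube_eq_pi (a : Fin n → ℝ) (l : ℝ) :
    Cube a l = Set.pi univ fun i => Ico (a i) (a i + l) := by
  ext x; simp [Cube, Set.mem_pi]

lemma measurableSet_cube (a : Fin n → ℝ) (l : ℝ) : MeasurableSet (Cube a l) := by
  rw [cube_eq_pi]; exact MeasurableSet.univ_pi fun _ => measurableSet_Ico

lemma volume_cube (a : Fin n → ℝ) (l : ℝ) :
    volume (Cube a l) = ENNReal.ofReal l ^ n := by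
  simp [cube_eq_pi, volume_pi_pi, Real.volume_Ico]

lemma avg_le_maximal (f : (Fin n → ℝ) → ℝ) {a : Fin n → ℝ} {l : ℝ} (hl : 0 < l)
    {x : Fin n → ℝ} (hx : x ∈ Cube a l) : avg (Cube a l) f ≤ maximal f x :=
  le_iSup_of_le a <| le_iSup_of_le l <| le_iSup_of_le hl <| le_iSup_of_le hx le_rfl

lemma exists_pos_lt_avg_cube_enlarge (f : (Fin n → ℝ) → ℝ) {a : Fin n → ℝ} {l : ℝ}
    (hl : 0 < l) {t : ℝ≥0∞} (ht : t < avg (Cube a l) f) :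
    ∃ δ > 0, t < avg (Cube (fun i => a i - δ) (l + 2 * δ)) f := by
  set I := ∫⁻ y in Cube a l, ENNReal.ofReal |f y|
  have hvol : ENNReal.ofReal l ^ n ≠ 0 := pow_ne_zero _ (ENNReal.ofReal_pos.2 hl).ne'
  have hlim : Tendsto (fun δ : ℝ => I / ENNReal.ofReal (l + 2 * δ) ^ n) (𝓝[>] 0)
      (𝓝 (I / ENNReal.ofReal l ^ n)) := by
    refine ENNReal.Tendsto.div tendsto_const_nhds (Or.inr hvol) ?_
      (Or.inl (ENNReal.pow_ne_top ENNReal.ofReal_ne_top))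
    have : Continuous fun δ : ℝ => ENNReal.ofReal (l + 2 * δ) ^ n :=
      (ENNReal.continuous_pow n).comp (ENNReal.continuous_ofReal.comp (by fun_prop))
    simpa using this.continuousWithinAt.tendsto (x := 0) (s := Ioi 0)
  rw [avg, volume_cube] at ht
  obtain ⟨δ, hδt, hδ⟩ := ((hlim.eventually (lt_mem_nhds ht)).and self_mem_nhdsWithin).exists
  refine ⟨δ, hδ, hδt.trans_le ?_⟩
  rw [avg, volume_cube]
  refine ENNReal.div_le_div_right (lintegral_mono_set fun y hy i => ?_) _
  have := hy i
  constructor <;> linarith [hδ, this.1, this.2]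

lemma lowerSemicontinuous_maximal (f : (Fin n → ℝ) → ℝ) : LowerSemicontinuous (maximal f) := by
  intro x t ht
  obtain ⟨a, l, hx, hl, hlt⟩ : ∃ a l, x ∈ Cube a l ∧ 0 < l ∧ t < avg (Cube a l) f := by
    simpa [maximal, lt_iSup_iff] using ht
  -- `Cube a l` is half-open, hence need not be a neighbourhood of `x`; a slightly larger cube is.
  obtain ⟨δ, hδ, hδlt⟩ := exists_pos_lt_avg_cube_enlarge f hl hlt
  have hbox : (Set.pi univ fun i => Ioo (a i - δ) (a i + l + δ)) ∈ 𝓝 x :=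
    set_pi_mem_nhds finite_univ fun i _ => Ioo_mem_nhds (by linarith [(hx i).1])
      (by linarith [(hx i).2])
  filter_upwards [hbox] with y hy
  refine hδlt.trans_le (avg_le_maximal f (by linarith) fun i => ?_)
  have := hy i (mem_univ i)
  constructor <;> linarith [this.1, this.2]

@[fun_prop]
lemma measurable_maximal (f : (Fin n → ℝ) → ℝ) : Measurable (maximal f) :=
  (lowerSemicontinuous_maximal f).measurable

lemma cube_subset_closedBall (a : Fin n → ℝ) {l : ℝ} (hl : 0 ≤ l) :
    Cube a l ⊆ closedBall (fun i => a i + l / 2) (l / 2) := by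
  intro y hy
  rw [mem_closedBall, dist_pi_le_iff (by linarith)]
  intro i
  rw [Real.dist_eq, abs_le]
  constructor <;> linarith [(hy i).1, (hy i).2]

lemma closedBall_subset_cube (a : Fin n → ℝ) {l : ℝ} (hl : 0 < l) :
    closedBall (fun i => a i + l / 2) (4 * (l / 2)) ⊆ Cube (fun i => a i - 2 * l) (5 * l) := by
  intro y hy
  rw [mem_closedBall, dist_pi_le_iff (by linarith)] at hy
  intro i
  have := abs_le.1 (Real.dist_eq _ _ ▸ hy i)
  constructor <;> linarith [this.1, this.2]

lemma exists_countable_disjoint_cover_cubes (T : Set ((Fin n → ℝ) × ℝ)) {R : ℝ}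
    (hT : ∀ c ∈ T, 0 < c.2 ∧ c.2 ≤ R) :
    ∃ u ⊆ T, u.Countable ∧ u.PairwiseDisjoint (fun c => Cube c.1 c.2) ∧
      ⋃ c ∈ T, Cube c.1 c.2 ⊆ ⋃ c ∈ u, Cube (fun i => c.1 i - 2 * c.2) (5 * c.2) := by
  -- Vitali needs an enlargement factor `> 3`; with `4`, the enlarged ball around the cube of
  -- side `l` has radius `2l` and fits in the concentric cube of side `5l`.
  obtain ⟨u, huT, hdisj, hcover⟩ :=
    Vitali.exists_disjoint_subfamily_covering_enlargement_closedBall T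
      (fun c => fun i => c.1 i + c.2 / 2) (fun c => c.2 / 2) (R / 2)
      (fun c hc => by linarith [hT c hc]) 4 (by norm_num)
  have hcount : u.Countable := hdisj.countable_of_nonempty_interior fun c hc =>
    ⟨_, ball_subset_interior_closedBall (mem_ball_self (by linarith [hT c (huT hc)]))⟩
  refine ⟨u, huT, hcount, hdisj.mono_on fun c hc => cube_subset_closedBall _ (hT c (huT hc)).1.le,
    ?_⟩
  simp only [iUnion_subset_iff]
  intro c hc x hx
  obtain ⟨b, hb, hsub⟩ := hcover c hc
  exact mem_biUnion hb (closedBall_subset_cube _ (hT b (huT hb)).1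
    (hsub (cube_subset_closedBall _ (hT c hc).1.le hx)))

lemma mul_withDensity_cube_five_le (f g : (Fin n → ℝ) → ℝ) {a : Fin n → ℝ} {l : ℝ}
    (hl : 0 < l) {t : ℝ≥0∞} (ht : t < avg (Cube a l) f) :
    t * volume.withDensity (fun x => ENNReal.ofReal (g x)) (Cube (fun i => a i - 2 * l) (5 * l))
      ≤ 5 ^ n * ∫⁻ y in Cube a l, ENNReal.ofReal |f y| * maximal g y := by
  set Q5 := Cube (fun i => a i - 2 * l) (5 * l)
  set V := ENNReal.ofReal l ^ n
  have hV0 : V ≠ 0 := pow_ne_zero _ (ENNReal.ofReal_pos.2 hl).ne'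
  have hVtop : V ≠ ∞ := ENNReal.pow_ne_top ENNReal.ofReal_ne_top
  have hvol5 : volume Q5 = 5 ^ n * V := by
    rw [volume_cube, ENNReal.ofReal_mul (by norm_num), mul_pow, ENNReal.ofReal_ofNat]
  have hg : ∀ y ∈ Cube a l,
      volume.withDensity (fun x => ENNReal.ofReal (g x)) Q5 ≤ 5 ^ n * V * maximal g y := by
    intro y hy
    calc volume.withDensity (fun x => ENNReal.ofReal (g x)) Q5
        ≤ ∫⁻ x in Q5, ENNReal.ofReal |g x| := by
          rw [withDensity_apply _ (measurableSet_cube _ _)]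
          exact lintegral_mono fun x => ENNReal.ofReal_le_ofReal (le_abs_self _)
      _ = avg Q5 g * volume Q5 := by
          rw [avg, ENNReal.div_mul_cancel (hvol5 ▸ mul_ne_zero (by simp) hV0)
            (hvol5 ▸ ENNReal.mul_ne_top (by simp) hVtop)]
      _ ≤ 5 ^ n * V * maximal g y := by
          rw [mul_comm, hvol5]
          gcongr
          refine avg_le_maximal g (by linarith) fun i => ?_
          constructor <;> linarith [(hy i).1, (hy i).2]
  have hf : t * V ≤ ∫⁻ y in Cube a l, ENNReal.ofReal |f y| := by
    rw [avg, volume_cube] at ht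
    exact ENNReal.mul_le_of_le_div ht.le
  refine (ENNReal.mul_le_mul_iff_left hV0 hVtop).1 ?_
  calc t * volume.withDensity (fun x => ENNReal.ofReal (g x)) Q5 * V
      = t * V * volume.withDensity (fun x => ENNReal.ofReal (g x)) Q5 := by ring
    _ ≤ (∫⁻ y in Cube a l, ENNReal.ofReal |f y|) *
          volume.withDensity (fun x => ENNReal.ofReal (g x)) Q5 := by gcongr
    _ ≤ ∫⁻ y in Cube a l, ENNReal.ofReal |f y| *
          volume.withDensity (fun x => ENNReal.ofReal (g x)) Q5 := lintegral_mul_const_le _ _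
    _ ≤ ∫⁻ y in Cube a l, ENNReal.ofReal |f y| * (5 ^ n * V * maximal g y) :=
          setLIntegral_mono' (measurableSet_cube _ _) fun y hy => by gcongr; exact hg y hy
    _ = 5 ^ n * (∫⁻ y in Cube a l, ENNReal.ofReal |f y| * maximal g y) * V := by
          rw [← lintegral_const_mul' _ _ (by simp), ← lintegral_mul_const' _ _ hVtop]
          congr 1 with y
          ring

def heavyCubes (f : (Fin n → ℝ) → ℝ) (t : ℝ≥0∞) (R : ℝ) :
    Set ((Fin n → ℝ) × ℝ) :=
  {c | 0 < c.2 ∧ c.2 ≤ R ∧ t < avg (Cube c.1 c.2) f}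

lemma mul_withDensity_iUnion_heavyCubes_le (f g : (Fin n → ℝ) → ℝ) (R : ℝ)
    (t : ℝ≥0∞) :
    t * volume.withDensity (fun x => ENNReal.ofReal (g x))
        (⋃ c ∈ heavyCubes f t R, Cube c.1 c.2)
      ≤ 5 ^ n * ∫⁻ x, ENNReal.ofReal |f x| * maximal g x := by
  set w := volume.withDensity fun x => ENNReal.ofReal (g x)
  obtain ⟨u, huT, hcount, hdisj, hcover⟩ :=
    exists_countable_disjoint_cover_cubes (heavyCubes f t R) fun c hc => ⟨hc.1, hc.2.1⟩
  have : Countable u := hcount.to_subtype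
  have hcover' : w (⋃ c ∈ heavyCubes f t R, Cube c.1 c.2)
      ≤ ∑' c : u, w (Cube (fun i => c.1.1 i - 2 * c.1.2) (5 * c.1.2)) :=
    (measure_mono hcover).trans (measure_biUnion_le w hcount _)
  have hpack : ∑' c : u, ∫⁻ y in Cube c.1.1 c.1.2, ENNReal.ofReal |f y| * maximal g y
      ≤ ∫⁻ x, ENNReal.ofReal |f x| * maximal g x := by
    rw [← lintegral_iUnion (fun _ => measurableSet_cube _ _) (hdisj.subtype _ _)]
    exact setLIntegral_le_lintegral _ _
  calc t * w (⋃ c ∈ heavyCubes f t R, Cube c.1 c.2)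
      ≤ ∑' c : u, t * w (Cube (fun i => c.1.1 i - 2 * c.1.2) (5 * c.1.2)) := by
        rw [ENNReal.tsum_mul_left]; exact mul_le_mul_right hcover' t
    _ ≤ ∑' c : u, 5 ^ n * ∫⁻ y in Cube c.1.1 c.1.2, ENNReal.ofReal |f y| * maximal g y :=
        ENNReal.tsum_le_tsum fun c =>
          mul_withDensity_cube_five_le f g (huT c.2).1 (huT c.2).2.2
    _ ≤ 5 ^ n * ∫⁻ x, ENNReal.ofReal |f x| * maximal g x := by
        rw [ENNReal.tsum_mul_left]; exact mul_le_mul_right hpack _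

lemma mul_withDensity_lt_maximal_le_lintegral (f g : (Fin n → ℝ) → ℝ) (t : ℝ≥0∞) :
    t * volume.withDensity (fun x => ENNReal.ofReal (g x)) {x | t < maximal f x}
      ≤ 5 ^ n * ∫⁻ x, ENNReal.ofReal |f x| * maximal g x := by
  have hunion : {x | t < maximal f x} = ⋃ R : ℕ, ⋃ c ∈ heavyCubes f t R, Cube c.1 c.2 := by
    ext x
    simp only [mem_ofPred_eq, maximal, lt_iSup_iff, mem_iUnion, exists_prop, heavyCubes]
    constructor
    · rintro ⟨a, l, hl, hx, ht⟩
      obtain ⟨R, hR⟩ := exists_nat_ge l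
      exact ⟨R, (a, l), ⟨hl, hR, ht⟩, hx⟩
    · rintro ⟨R, c, ⟨hl, -, ht⟩, hx⟩
      exact ⟨c.1, c.2, hl, hx, ht⟩
  have hmono : Monotone fun R : ℕ => ⋃ c ∈ heavyCubes f t R, Cube c.1 c.2 := fun R R' h =>
    biUnion_subset_biUnion_left fun c hc => ⟨hc.1, hc.2.1.trans (Nat.cast_le.2 h), hc.2.2⟩
  rw [hunion, hmono.measure_iUnion, ENNReal.mul_iSup]
  exact iSup_le fun R => mul_withDensity_iUnion_heavyCubes_le f g R t

lemma avg_le_avg_indicator_add (Q : Set (Fin n → ℝ)) (f : (Fin n → ℝ) → ℝ)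
    (t : ℝ≥0∞) :
    avg Q f ≤ avg Q ({y | t < ENNReal.ofReal |f y|}.indicator f) + t := by
  set h := {y | t < ENNReal.ofReal |f y|}.indicator f
  have hfh : ∀ y, ENNReal.ofReal |f y| ≤ ENNReal.ofReal |h y| + t := by
    intro y
    by_cases hy : t < ENNReal.ofReal |f y|
    · simp [h, indicator_of_mem (show y ∈ {y | t < ENNReal.ofReal |f y|} from hy)]
    · exact (not_lt.1 hy).trans le_add_self
  calc avg Q f ≤ ((∫⁻ y in Q, ENNReal.ofReal |h y|) + t * volume Q) / volume Q := by
        rw [avg, ← setLIntegral_const, ← lintegral_add_right _ measurable_const]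
        exact ENNReal.div_le_div_right (lintegral_mono hfh) _
    _ ≤ avg Q h + t := by
        rw [ENNReal.add_div, avg, mul_div_assoc]
        gcongr
        exact mul_le_of_le_one_right' ENNReal.div_self_le_one

lemma maximal_le_maximal_indicator_add (f : (Fin n → ℝ) → ℝ) (t : ℝ≥0∞)
    (x : Fin n → ℝ) :
    maximal f x ≤ maximal ({y | t < ENNReal.ofReal |f y|}.indicator f) x + t :=
  iSup₂_le fun a l => iSup₂_le fun hl hx =>
    (avg_le_avg_indicator_add _ f t).trans (by gcongr; exact avg_le_maximal _ hl hx)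

lemma mul_withDensity_lt_maximal_le_withDensity (f g : (Fin n → ℝ) → ℝ) (t : ℝ≥0∞) :
    t * volume.withDensity (fun x => ENNReal.ofReal (g x)) {x | t < maximal f x}
      ≤ 2 * 5 ^ n * volume.withDensity (fun x => ENNReal.ofReal |f x| * maximal g x)
          {x | t < 2 * ENNReal.ofReal |f x|} := by
  set S := {x | t / 2 < ENNReal.ofReal |f x|}
  have hS : S = {x | t < 2 * ENNReal.ofReal |f x|} := by
    ext x
    rw [mem_ofPred_eq, ENNReal.div_lt_iff (Or.inl two_ne_zero) (Or.inl ENNReal.ofNat_ne_top),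
      mul_comm]
    rfl
  have hsub : {x | t < maximal f x} ⊆ {x | t / 2 < maximal (S.indicator f) x} := by
    intro x (hx : t < maximal f x)
    show t / 2 < _
    by_contra! hle
    have := (maximal_le_maximal_indicator_add f (t / 2) x).trans (add_le_add_left hle _)
    exact (lt_of_lt_of_le hx this).ne' (ENNReal.add_halves t)
  have hint : ∫⁻ x, ENNReal.ofReal |S.indicator f x| * maximal g x
      ≤ ∫⁻ x in S, ENNReal.ofReal |f x| * maximal g x := by
    refine le_of_eq_of_le (lintegral_congr fun x => ?_) (lintegral_indicator_le _ _)
    by_cases hx : x ∈ S <;> simp [hx]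
  calc t * volume.withDensity (fun x => ENNReal.ofReal (g x)) {x | t < maximal f x}
      ≤ 2 * (t / 2 * volume.withDensity (fun x => ENNReal.ofReal (g x))
          {x | t / 2 < maximal (S.indicator f) x}) := by
        rw [← mul_assoc, ENNReal.mul_div_cancel two_ne_zero ENNReal.ofNat_ne_top]
        gcongr
    _ ≤ 2 * (5 ^ n * ∫⁻ x, ENNReal.ofReal |S.indicator f x| * maximal g x) :=
        mul_le_mul_right (mul_withDensity_lt_maximal_le_lintegral _ g _) 2
    _ ≤ 2 * 5 ^ n * ∫⁻ x in S, ENNReal.ofReal |f x| * maximal g x := by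
        rw [mul_assoc]; gcongr
    _ = _ := by rw [withDensity_apply', hS]

lemma lintegral_Ioo_rpow {r : ℝ} (hr : -1 < r) {b : ℝ} (hb : 0 ≤ b) :
    ∫⁻ s in Ioo 0 b, ENNReal.ofReal (s ^ r) = ENNReal.ofReal (b ^ (r + 1) / (r + 1)) := by
  rcases hb.eq_or_lt with rfl | hb
  · simp [Real.zero_rpow (by linarith : r + 1 ≠ 0)]
  rw [← ofReal_integral_eq_lintegral_ofReal
      ((intervalIntegral.integrableOn_Ioo_rpow_iff hb).2 hr)
      ((ae_restrict_mem measurableSet_Ioo).mono fun s hs => Real.rpow_nonneg hs.1.le r),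
    ← integral_Ioc_eq_integral_Ioo, ← intervalIntegral.integral_of_le hb.le,
    integral_rpow (Or.inl hr), Real.zero_rpow (by linarith), sub_zero]

lemma rpow_eq_ofReal_mul_lintegral_indicator {p : ℝ} (hp : 0 < p) (c : ℝ≥0∞) :
    c ^ p = ENNReal.ofReal p * ∫⁻ s in Ioi 0,
      {s : ℝ | ENNReal.ofReal s < c}.indicator (fun s => ENNReal.ofReal (s ^ (p - 1))) s := by
  have hfin : ∀ b : ℝ, 0 ≤ b → ENNReal.ofReal b ^ p = ENNReal.ofReal p * ∫⁻ s in Ioi 0,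
      {s : ℝ | ENNReal.ofReal s < ENNReal.ofReal b}.indicator
        (fun s => ENNReal.ofReal (s ^ (p - 1))) s := by
    intro b hb
    have hset : {s : ℝ | ENNReal.ofReal s < ENNReal.ofReal b} ∩ Ioi 0 = Ioo 0 b := by
      ext s
      simp only [mem_inter_iff, mem_ofPred_eq, mem_Ioi, mem_Ioo, ENNReal.ofReal_lt_ofReal_iff']
      constructor
      · rintro ⟨⟨h, -⟩, h0⟩; exact ⟨h0, h⟩
      · rintro ⟨h0, h⟩; exact ⟨⟨h, h0.trans h⟩, h0⟩
    rw [lintegral_indicator (measurableSet_lt (by fun_prop) measurable_const),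
      Measure.restrict_restrict (measurableSet_lt (by fun_prop) measurable_const), hset,
      lintegral_Ioo_rpow (by linarith) hb, sub_add_cancel, ← ENNReal.ofReal_mul hp.le,
      mul_div_cancel₀ _ hp.ne', ENNReal.ofReal_rpow_of_nonneg hb hp.le]
  rcases eq_top_or_lt_top c with rfl | hc
  · rw [ENNReal.top_rpow_of_pos hp, eq_comm]
    refine ENNReal.eq_top_of_forall_nnreal_le fun r => ?_
    have hr : (r : ℝ≥0∞) = ENNReal.ofReal ((r : ℝ) ^ (1 / p)) ^ p := by
      rw [ENNReal.ofReal_rpow_of_nonneg (by positivity) hp.le, ← Real.rpow_mul r.coe_nonneg,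
        one_div_mul_cancel hp.ne', Real.rpow_one, ENNReal.ofReal_coe_nnreal]
    rw [hr, hfin _ (by positivity)]
    gcongr
    exact le_top
  · rw [← ENNReal.ofReal_toReal hc.ne]
    exact hfin _ ENNReal.toReal_nonneg

theorem lintegral_rpow_eq_ofReal_mul_lintegral_meas_lt {α : Type*} [MeasurableSpace α]
    (μ : Measure α) [SFinite μ] {F : α → ℝ≥0∞} (hF : Measurable F) {p : ℝ}
    (hp : 0 < p) :
    ∫⁻ x, F x ^ p ∂μ = ENNReal.ofReal p *
      ∫⁻ s in Ioi 0, μ {x | ENNReal.ofReal s < F x} * ENNReal.ofReal (s ^ (p - 1)) := by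
  have hmeas : Measurable (Function.uncurry fun x (s : ℝ) =>
      {s : ℝ | ENNReal.ofReal s < F x}.indicator (fun s => ENNReal.ofReal (s ^ (p - 1))) s) :=
    Measurable.indicator (f := fun z : α × ℝ => ENNReal.ofReal (z.2 ^ (p - 1))) (by fun_prop)
      (measurableSet_lt (by fun_prop) (hF.comp measurable_fst))
  simp_rw [rpow_eq_ofReal_mul_lintegral_indicator hp (F _)]
  rw [lintegral_const_mul' _ _ ENNReal.ofReal_ne_top, lintegral_lintegral_swap hmeas.aemeasurable]
  congr 1
  refine lintegral_congr fun s => ?_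
  rw [mul_comm, ← lintegral_indicator_const (measurableSet_lt measurable_const hF)]
  rfl

theorem lintegral_rpow_le_of_mul_meas_lt_le {α : Type*} [MeasurableSpace α] {μ ν : Measure α}
    [SFinite μ] [SFinite ν] {G F : α → ℝ≥0∞} (hG : Measurable G) (hF : Measurable F)
    {C : ℝ≥0∞} (hC : C ≠ ∞) {p : ℝ} (hp : 1 < p)
    (hweak : ∀ t : ℝ≥0∞, t * μ {x | t < G x} ≤ C * ν {x | t < F x}) :
    ∫⁻ x, G x ^ p ∂μ
      ≤ C * ENNReal.ofReal (p / (p - 1)) * ∫⁻ x, F x ^ (p - 1) ∂ν := by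
  have hlevel : ∀ s ∈ Ioi (0 : ℝ),
      μ {x | ENNReal.ofReal s < G x} * ENNReal.ofReal (s ^ (p - 1))
        ≤ C * (ν {x | ENNReal.ofReal s < F x} * ENNReal.ofReal (s ^ (p - 1 - 1))) := by
    intro s (hs : 0 < s)
    have hpow : ENNReal.ofReal (s ^ (p - 1))
        = ENNReal.ofReal s * ENNReal.ofReal (s ^ (p - 1 - 1)) := by
      rw [← ENNReal.ofReal_mul hs.le, ← Real.rpow_one_add' hs.le (by linarith), add_sub_cancel]
    calc _ = ENNReal.ofReal s * μ {x | ENNReal.ofReal s < G x} *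
          ENNReal.ofReal (s ^ (p - 1 - 1)) := by rw [hpow]; ring
      _ ≤ C * ν {x | ENNReal.ofReal s < F x} * ENNReal.ofReal (s ^ (p - 1 - 1)) :=
          mul_le_mul_left (hweak _) _
      _ = _ := mul_assoc _ _ _
  have hp1 : ENNReal.ofReal (p - 1) ≠ 0 := (ENNReal.ofReal_pos.2 (by linarith)).ne'
  calc ∫⁻ x, G x ^ p ∂μ
      = ENNReal.ofReal p * ∫⁻ s in Ioi 0,
          μ {x | ENNReal.ofReal s < G x} * ENNReal.ofReal (s ^ (p - 1)) :=
        lintegral_rpow_eq_ofReal_mul_lintegral_meas_lt μ hG (by linarith)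
    _ ≤ ENNReal.ofReal p * (C * ∫⁻ s in Ioi 0,
          ν {x | ENNReal.ofReal s < F x} * ENNReal.ofReal (s ^ (p - 1 - 1))) := by
        rw [← lintegral_const_mul' C _ hC]
        exact mul_le_mul_right (setLIntegral_mono' measurableSet_Ioi hlevel) _
    _ = ENNReal.ofReal p *
          (C * ((ENNReal.ofReal (p - 1))⁻¹ * ∫⁻ x, F x ^ (p - 1) ∂ν)) := by
        rw [lintegral_rpow_eq_ofReal_mul_lintegral_meas_lt ν hF (by linarith),
          ← mul_assoc (ENNReal.ofReal (p - 1))⁻¹,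
          ENNReal.inv_mul_cancel hp1 ENNReal.ofReal_ne_top, one_mul]
    _ = C * ENNReal.ofReal (p / (p - 1)) * ∫⁻ x, F x ^ (p - 1) ∂ν := by
        rw [ENNReal.ofReal_div_of_pos (by linarith), div_eq_mul_inv]
        ring

lemma rpow_eq_mul_rpow_sub_one (x : ℝ≥0∞) {p : ℝ} (hp : 1 ≤ p) :
    x ^ p = x * x ^ (p - 1) := by
  conv_lhs => rw [← add_sub_cancel 1 p]
  rw [ENNReal.rpow_add_of_nonneg _ _ zero_le_one (sub_nonneg.2 hp), ENNReal.rpow_one]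

theorem lintegral_maximal_rpow_mul_le {p : ℝ} (hp : 1 < p) {f g : (Fin n → ℝ) → ℝ}
    (hf : Measurable f) (hg : Measurable g) :
    ∫⁻ x, maximal f x ^ p * ENNReal.ofReal (g x)
      ≤ 2 ^ p * 5 ^ n * ENNReal.ofReal (p / (p - 1)) *
          ∫⁻ x, ENNReal.ofReal |f x| ^ p * maximal g x := by
  have hstrong := lintegral_rpow_le_of_mul_meas_lt_le
    (μ := volume.withDensity fun x => ENNReal.ofReal (g x))
    (ν := volume.withDensity fun x => ENNReal.ofReal |f x| * maximal g x)
    (measurable_maximal f) (F := fun x => 2 * ENNReal.ofReal |f x|) (by fun_prop)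
    (by finiteness) hp (mul_withDensity_lt_maximal_le_withDensity f g)
  rw [lintegral_withDensity_eq_lintegral_mul _ hg.ennreal_ofReal (by fun_prop),
    lintegral_withDensity_eq_lintegral_mul _ (by fun_prop) (by fun_prop)] at hstrong
  calc ∫⁻ x, maximal f x ^ p * ENNReal.ofReal (g x)
      = ∫⁻ x, ENNReal.ofReal (g x) * maximal f x ^ p := by simp only [mul_comm]
    _ ≤ 2 * 5 ^ n * ENNReal.ofReal (p / (p - 1)) * (2 ^ (p - 1) *
          ∫⁻ x, ENNReal.ofReal |f x| ^ p * maximal g x) := by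
        rw [← lintegral_const_mul' _ _ (by finiteness)]
        refine hstrong.trans_eq (congrArg _ (lintegral_congr fun x => ?_))
        simp only [Pi.mul_apply, ENNReal.mul_rpow_of_nonneg _ _ (by linarith : 0 ≤ p - 1),
          rpow_eq_mul_rpow_sub_one _ hp.le]
        ring
    _ = 2 ^ p * 5 ^ n * ENNReal.ofReal (p / (p - 1)) *
          ∫⁻ x, ENNReal.ofReal |f x| ^ p * maximal g x := by
        rw [rpow_eq_mul_rpow_sub_one (2 : ℝ≥0∞) hp.le]
        ring

end FeffermanStein

/-- Fefferman–Stein dual maximal inequality. -/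
theorem fefferman_stein_dual (n : ℕ) (p : ℝ) (hp : 1 < p) :
    ∃ c : ℝ≥0∞, c < ∞ ∧ ∀ f g : (Fin n → ℝ) → ℝ,
      Measurable f → Measurable g → (∀ x, 0 ≤ f x) → (∀ x, 0 ≤ g x) →
      (∫⁻ x, (maximal f x) ^ p * ENNReal.ofReal (g x))
        ≤ c * ∫⁻ x, ENNReal.ofReal (f x) ^ p * maximal g x := by
  refine ⟨2 ^ p * 5 ^ n * ENNReal.ofReal (p / (p - 1)), by finiteness,
    fun f g hf hg hf0 _ => ?_⟩
  simpa only [abs_of_nonneg (hf0 _)] using FeffermanStein.lintegral_maximal_rpow_mul_le hp hf hg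
end

section
/- Discrete convolution inequality: Let 0 < a < 1, 1 ≤ p ≤ ∞, 1 ≤ r ≤ ∞, 0 < q < ∞. Let {f_k}_{k∈ℤ} and {g_k}_{k∈ℤ} be sequences of nonnegative measurable functions on ℝⁿ, and define δ_k = ∑_{j=-∞}^{k} a^{k-j} (∫_{ℝⁿ} g_k f_j)^{1/q} and η_k = ∑_{j=k}^{∞} a^{j-k} (∫_{ℝⁿ} g_k f_j)^{1/q}. Then there exists c > 0 depending only on a and q such that ∑_k δ_k^q + ∑_k η_k^q ≤ c · ‖(∑_k f_k^r)^{1/r}‖_{L_p(ℝⁿ)} · ‖(∑_k g_k^{r'})^{1/r'}‖_{L_{p'}(ℝⁿ)}, where p', r' are conjugate exponents. -/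
open MeasureTheory ENNReal Filter
open scoped ENNReal Topology

/-! Pairing `g_k` with the shifted sequence `f_{k+m}` and applying Hölder's inequality first in
`ℓ^r` and then in `L^p` gives `∑_k ∫ g_k f_{k+m} ≤ ‖(f_k)‖_{L^p(ℓ^r)} ‖(g_k)‖_{L^{p'}(ℓ^{r'})}`
uniformly in `m`. It remains to bound `∑_k (∑_m a^m I_{k,m}^{1/q})^q` by a multiple of
`sup_m ∑_k I_{k,m}`: for `q ≤ 1` by subadditivity of `t ↦ t^q`, for `q ≥ 1` by the weighted
Hölder inequality `(∑_m a^m x_m^{1/q})^q ≤ (1-a)^{1-q} ∑_m a^m x_m`; summing first over `k` then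
leaves a geometric series in `m`. -/

section Holder

variable {α : Type*} [MeasurableSpace α] {μ : Measure α}

theorem lintegral_mul_le_eLpNorm_top_mul_eLpNorm_one (f : α → ℝ≥0∞) {g : α → ℝ≥0∞}
    (hg : AEMeasurable g μ) : ∫⁻ x, f x * g x ∂μ ≤ eLpNorm f ∞ μ * eLpNorm g 1 μ := by
  simp only [eLpNorm_exponent_top, eLpNormEssSup, eLpNorm_one_eq_lintegral_enorm, enorm_eq_self]
  rw [← lintegral_const_mul'' _ hg]
  exact lintegral_mono_ae ((ae_le_essSup f).mono fun x hx => mul_le_mul_left hx _)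

theorem lintegral_mul_le_eLpNorm_mul_eLpNorm {p q : ℝ≥0∞} [p.HolderConjugate q]
    {f g : α → ℝ≥0∞} (hf : AEMeasurable f μ) (hg : AEMeasurable g μ) :
    ∫⁻ x, f x * g x ∂μ ≤ eLpNorm f p μ * eLpNorm g q μ := by
  by_cases hp : p = ∞
  · obtain rfl : q = 1 := (HolderConjugate.eq_top_iff_eq_one p q).1 hp
    subst hp
    exact lintegral_mul_le_eLpNorm_top_mul_eLpNorm_one f hg
  by_cases hq : q = ∞
  · obtain rfl : p = 1 := (HolderConjugate.eq_top_iff_eq_one q p).1 hq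
    subst hq
    simpa only [mul_comm] using lintegral_mul_le_eLpNorm_top_mul_eLpNorm_one g hf (μ := μ)
  rw [eLpNorm_eq_lintegral_rpow_enorm_toReal (HolderConjugate.ne_zero p q) hp,
    eLpNorm_eq_lintegral_rpow_enorm_toReal (HolderConjugate.ne_zero q p) hq]
  simpa only [enorm_eq_self, Pi.mul_apply] using
    ENNReal.lintegral_mul_le_Lp_mul_Lq μ (HolderConjugate.toReal_of_ne_top hp hq) hf hg

end Holder

section Counting

variable {ι : Type*} [MeasurableSpace ι] [Countable ι] [MeasurableSingletonClass ι]

theorem measurable_eLpNorm_count {α : Type*} [MeasurableSpace α] {F : ι → α → ℝ≥0∞}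
    (hF : ∀ i, Measurable (F i)) (r : ℝ≥0∞) :
    Measurable fun x => eLpNorm (fun i => F i x) r Measure.count := by
  rcases eq_or_ne r 0 with rfl | hr0
  · simp only [eLpNorm_exponent_zero, measurable_const]
  rcases eq_or_ne r ∞ with rfl | hrtop
  · simp only [eLpNorm_exponent_top, eLpNormEssSup_count, enorm_eq_self]
    exact .iSup hF
  · simp only [eLpNorm_eq_lintegral_rpow_enorm_toReal hr0 hrtop, enorm_eq_self, lintegral_count]
    exact (Measurable.tsum fun i => (hF i).pow_const _).pow_const _

theorem eLpNorm_count_comp_add_right [AddGroup ι] [MeasurableAdd ι] (w : ι → ℝ≥0∞) (m : ι)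
    (r : ℝ≥0∞) : eLpNorm (fun i => w (i + m)) r Measure.count = eLpNorm w r Measure.count :=
  eLpNorm_comp_measurePreserving (measurable_of_countable w).aestronglyMeasurable
    (measurePreserving_add_right Measure.count m)

theorem tsum_lintegral_mul_comp_add_le {α : Type*} [MeasurableSpace α] {μ : Measure α}
    [AddGroup ι] [MeasurableAdd ι] {p p' r r' : ℝ≥0∞} [p.HolderConjugate p']
    [r.HolderConjugate r'] {F G : ι → α → ℝ≥0∞} (hF : ∀ i, Measurable (F i))
    (hG : ∀ i, Measurable (G i)) (m : ι) :
    ∑' i, ∫⁻ x, G i x * F (i + m) x ∂μ ≤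
      eLpNorm (fun x => eLpNorm (fun i => F i x) r Measure.count) p μ *
        eLpNorm (fun x => eLpNorm (fun i => G i x) r' Measure.count) p' μ := by
  have pointwise : ∀ x, ∑' i, G i x * F (i + m) x ≤
      eLpNorm (fun i => F i x) r Measure.count * eLpNorm (fun i => G i x) r' Measure.count := by
    intro x
    calc ∑' i, G i x * F (i + m) x = ∫⁻ i, F (i + m) x * G i x ∂Measure.count := by
          simp only [lintegral_count, mul_comm]
      _ ≤ eLpNorm (fun i => F (i + m) x) r Measure.count *
            eLpNorm (fun i => G i x) r' Measure.count :=
          lintegral_mul_le_eLpNorm_mul_eLpNorm (measurable_of_countable _).aemeasurable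
            (measurable_of_countable _).aemeasurable
      _ = _ := by rw [eLpNorm_count_comp_add_right (fun i => F i x)]
  calc ∑' i, ∫⁻ x, G i x * F (i + m) x ∂μ = ∫⁻ x, ∑' i, G i x * F (i + m) x ∂μ :=
        (lintegral_tsum fun i => ((hG i).mul (hF (i + m))).aemeasurable).symm
    _ ≤ ∫⁻ x, eLpNorm (fun i => F i x) r Measure.count *
          eLpNorm (fun i => G i x) r' Measure.count ∂μ := lintegral_mono pointwise
    _ ≤ _ := lintegral_mul_le_eLpNorm_mul_eLpNorm
          (measurable_eLpNorm_count hF r).aemeasurable (measurable_eLpNorm_count hG r').aemeasurable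

end Counting

theorem ENNReal.rpow_finsetSum_le_sum_rpow {ι : Type*} (s : Finset ι) (f : ι → ℝ≥0∞) {q : ℝ}
    (hq0 : 0 < q) (hq1 : q ≤ 1) : (∑ i ∈ s, f i) ^ q ≤ ∑ i ∈ s, f i ^ q := by
  classical
  induction s using Finset.induction_on with
  | empty => simp [zero_rpow_of_pos hq0]
  | insert i s hi ih =>
    rw [Finset.sum_insert hi, Finset.sum_insert hi]
    exact (ENNReal.rpow_add_le_add_rpow _ _ hq0.le hq1).trans (add_le_add_right ih _)

theorem ENNReal.rpow_tsum_le_tsum_rpow {ι : Type*} (f : ι → ℝ≥0∞) {q : ℝ}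
    (hq0 : 0 < q) (hq1 : q ≤ 1) : (∑' i, f i) ^ q ≤ ∑' i, f i ^ q := by
  rw [← ENNReal.le_rpow_inv_iff hq0, ENNReal.tsum_eq_iSup_sum]
  exact iSup_le fun s => (ENNReal.le_rpow_inv_iff hq0).2
    ((rpow_finsetSum_le_sum_rpow s f hq0 hq1).trans (ENNReal.sum_le_tsum s))

theorem ENNReal.inner_le_weight_mul_Lp_tsum {ι : Type*} {p : ℝ} (hp : 1 ≤ p) (w f : ι → ℝ≥0∞) :
    ∑' i, w i * f i ≤ (∑' i, w i) ^ (1 - p⁻¹) * (∑' i, w i * f i ^ p) ^ p⁻¹ := by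
  have hp0 : 0 ≤ p⁻¹ := by positivity
  have hp1 : 0 ≤ 1 - p⁻¹ := sub_nonneg.2 (inv_le_one_of_one_le₀ hp)
  rw [ENNReal.tsum_eq_iSup_sum]
  refine iSup_le fun s => (inner_le_weight_mul_Lp_of_nonneg s hp w f).trans ?_
  gcongr <;> exact ENNReal.sum_le_tsum s

theorem ENNReal.rpow_tsum_mul_rpow_inv_le {ι : Type*} {q : ℝ} (hq : 1 ≤ q) (w x : ι → ℝ≥0∞) :
    (∑' i, w i * x i ^ q⁻¹) ^ q ≤ (∑' i, w i) ^ (q - 1) * ∑' i, w i * x i := by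
  have hq0 : 0 < q := one_pos.trans_le hq
  have hx : ∀ i, (x i ^ q⁻¹) ^ q = x i := fun i => rpow_inv_rpow hq0.ne' _
  calc (∑' i, w i * x i ^ q⁻¹) ^ q
      ≤ ((∑' i, w i) ^ (1 - q⁻¹) * (∑' i, w i * x i) ^ q⁻¹) ^ q := by
        gcongr
        simpa only [hx] using inner_le_weight_mul_Lp_tsum hq w fun i => x i ^ q⁻¹
    _ = (∑' i, w i) ^ (q - 1) * ∑' i, w i * x i := by
        rw [mul_rpow_of_nonneg _ _ hq0.le, ← rpow_mul, rpow_inv_rpow hq0.ne', sub_mul, one_mul,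
          inv_mul_cancel₀ hq0.ne']

theorem ENNReal.exists_rpow_tsum_geometric_le {b : ℝ≥0∞} (hb : b < 1) {q : ℝ} (hq : 0 < q) :
    ∃ ρ < 1, ∃ C, 0 < C ∧ C < ∞ ∧
      ∀ x : ℕ → ℝ≥0∞, (∑' m, b ^ m * x m ^ q⁻¹) ^ q ≤ C * ∑' m, ρ ^ m * x m := by
  rcases le_total q 1 with hq1 | hq1
  · refine ⟨b ^ q, rpow_lt_one hb hq, 1, one_pos, one_lt_top, fun x => ?_⟩
    refine (rpow_tsum_le_tsum_rpow _ hq hq1).trans_eq ?_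
    rw [one_mul]
    congr 1 with m
    rw [mul_rpow_of_nonneg _ _ hq.le, rpow_inv_rpow hq.ne', ← rpow_natCast, ← rpow_natCast,
      ← rpow_mul, ← rpow_mul, mul_comm q]
  · have hS : ∑' m, b ^ m = (1 - b)⁻¹ := tsum_geometric b
    refine ⟨b, hb, (1 - b)⁻¹ ^ (q - 1), ?_, ?_, fun x => hS ▸ rpow_tsum_mul_rpow_inv_le hq1 _ x⟩
    · exact rpow_pos (ENNReal.inv_pos.2 (by finiteness)) (inv_ne_top.2 (tsub_pos_of_lt hb).ne')
    · exact rpow_lt_top_of_nonneg (sub_nonneg.2 hq1) (inv_ne_top.2 (tsub_pos_of_lt hb).ne')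

theorem ENNReal.exists_tsum_rpow_tsum_geometric_le {b : ℝ≥0∞} (hb : b < 1) {q : ℝ} (hq : 0 < q)
    (κ : Type*) : ∃ C, 0 < C ∧ C < ∞ ∧ ∀ (I : κ → ℕ → ℝ≥0∞) (A : ℝ≥0∞),
      (∀ m, ∑' k, I k m ≤ A) → ∑' k, (∑' m, b ^ m * I k m ^ q⁻¹) ^ q ≤ C * A := by
  obtain ⟨ρ, hρ, C, hC0, hCtop, hC⟩ := exists_rpow_tsum_geometric_le hb hq
  refine ⟨C * (1 - ρ)⁻¹, ?_, ?_, fun I A hI => ?_⟩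
  · exact ENNReal.mul_pos hC0.ne' (ENNReal.inv_ne_zero.2 (by finiteness))
  · exact ENNReal.mul_lt_top hCtop (ENNReal.inv_lt_top.2 (tsub_pos_of_lt hρ))
  calc ∑' k, (∑' m, b ^ m * I k m ^ q⁻¹) ^ q
      ≤ ∑' k, C * ∑' m, ρ ^ m * I k m := ENNReal.tsum_le_tsum fun k => hC (I k)
    _ = C * ∑' m, ρ ^ m * ∑' k, I k m := by
        rw [ENNReal.tsum_mul_left, ENNReal.tsum_comm]
        simp only [ENNReal.tsum_mul_left]
    _ ≤ C * ∑' m, ρ ^ m * A := by gcongr with m; exact hI m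
    _ = C * (1 - ρ)⁻¹ * A := by rw [ENNReal.tsum_mul_right, tsum_geometric, mul_assoc]

theorem tsum_ite_le_eq_tsum_nat {M : Type*} [AddCommMonoid M] [TopologicalSpace M]
    (k : ℤ) (f : ℤ → M) : ∑' j, (if j ≤ k then f j else 0) = ∑' m : ℕ, f (k - m) := by
  rw [← Function.Injective.tsum_eq (g := fun m : ℕ => k - m) (fun m m' h => by simpa using h)]
  · simp
  · intro j hj
    have : j ≤ k := by_contra fun h => hj (if_neg h)
    exact ⟨(k - j).toNat, by simp [this]⟩

theorem tsum_ite_ge_eq_tsum_nat {M : Type*} [AddCommMonoid M] [TopologicalSpace M]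
    (k : ℤ) (f : ℤ → M) : ∑' j, (if k ≤ j then f j else 0) = ∑' m : ℕ, f (k + m) := by
  rw [← Function.Injective.tsum_eq (g := fun m : ℕ => k + m) (fun m m' h => by simpa using h)]
  · simp
  · intro j hj
    have : k ≤ j := by_contra fun h => hj (if_neg h)
    exact ⟨(j - k).toNat, by simp [this]⟩

theorem lqNorm_eq_eLpNorm {r : ℝ≥0∞} (hr : r ≠ 0) (w : ℤ → ℝ≥0∞) :
    lqNorm r w = eLpNorm w r Measure.count := by
  unfold lqNorm
  split_ifs with hrtop
  · simp [hrtop, eLpNorm_exponent_top]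
  · simp [eLpNorm_eq_lintegral_rpow_enorm_toReal hr hrtop, lintegral_count]

theorem lpNorm_eq_eLpNorm {n : ℕ} {p : ℝ≥0∞} (hp : p ≠ 0) (g : (Fin n → ℝ) → ℝ≥0∞) :
    _root_.lpNorm p g = eLpNorm g p volume := by
  unfold _root_.lpNorm
  split_ifs with hptop
  · simp [hptop, eLpNorm_exponent_top, eLpNormEssSup]
  · simp [eLpNorm_eq_lintegral_rpow_enorm_toReal hp hptop]

theorem tsum_lintegral_mul_comp_add_le_lpNorm_mul_lpNorm {n : ℕ} {p p' r r' : ℝ≥0∞}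
    [p.HolderConjugate p'] [r.HolderConjugate r'] {F G : ℤ → (Fin n → ℝ) → ℝ≥0∞}
    (hF : ∀ k, Measurable (F k)) (hG : ∀ k, Measurable (G k)) (m : ℤ) :
    ∑' k, ∫⁻ x, G k x * F (k + m) x ≤
      _root_.lpNorm p (fun x => lqNorm r fun k => F k x) *
        _root_.lpNorm p' (fun x => lqNorm r' fun k => G k x) := by
  simp only [lpNorm_eq_eLpNorm (HolderConjugate.ne_zero p p'),
    lpNorm_eq_eLpNorm (HolderConjugate.ne_zero p' p),
    lqNorm_eq_eLpNorm (HolderConjugate.ne_zero r r'), lqNorm_eq_eLpNorm (HolderConjugate.ne_zero r' r)]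
  exact tsum_lintegral_mul_comp_add_le hF hG m

/-- discrete convolution inequality. -/
theorem discrete_convolution_inequality (n : ℕ) (a q : ℝ)
    (ha0 : 0 < a) (ha1 : a < 1) (hq : 0 < q) :
    ∃ c : ℝ≥0∞, 0 < c ∧ c < ∞ ∧ ∀ p r p' r' : ℝ≥0∞,
      1 ≤ p → 1 ≤ r → 1 / p + 1 / p' = 1 → 1 / r + 1 / r' = 1 →
      ∀ f g : ℤ → (Fin n → ℝ) → ℝ,
        (∀ k x, 0 ≤ f k x) → (∀ k x, 0 ≤ g k x) →
        (∀ k, Measurable (f k)) → (∀ k, Measurable (g k)) →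
        (∑' k : ℤ, (∑' j : ℤ, if j ≤ k then ENNReal.ofReal (a ^ (k - j)) *
              (∫⁻ x, ENNReal.ofReal (g k x) * ENNReal.ofReal (f j x)) ^ (1 / q) else 0) ^ q) +
          (∑' k : ℤ, (∑' j : ℤ, if k ≤ j then ENNReal.ofReal (a ^ (j - k)) *
              (∫⁻ x, ENNReal.ofReal (g k x) * ENNReal.ofReal (f j x)) ^ (1 / q) else 0) ^ q)
          ≤ c * lpNorm p (fun x => lqNorm r fun k => ENNReal.ofReal (f k x)) *
              lpNorm p' (fun x => lqNorm r' fun k => ENNReal.ofReal (g k x)) := by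
  obtain ⟨C, hC0, hCtop, hC⟩ :=
    exists_tsum_rpow_tsum_geometric_le (ENNReal.ofReal_lt_one.2 ha1) hq ℤ
  refine ⟨2 * C, by positivity, ENNReal.mul_lt_top (by norm_num) hCtop, ?_⟩
  intro p r p' r' _ _ hpp' hrr' f g _ _ hf hg
  have : p.HolderConjugate p' := holderConjugate_iff.2 (by simpa only [one_div] using hpp')
  have : r.HolderConjugate r' := holderConjugate_iff.2 (by simpa only [one_div] using hrr')
  set I : ℤ → ℤ → ℝ≥0∞ := fun k j => ∫⁻ x, ENNReal.ofReal (g k x) * ENNReal.ofReal (f j x)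
  set A := lpNorm p (fun x => lqNorm r fun k => ENNReal.ofReal (f k x)) *
    lpNorm p' (fun x => lqNorm r' fun k => ENNReal.ofReal (g k x))
  have hshift : ∀ m : ℤ, ∑' k, I k (k + m) ≤ A :=
    tsum_lintegral_mul_comp_add_le_lpNorm_mul_lpNorm (fun k => (hf k).ennreal_ofReal)
      (fun k => (hg k).ennreal_ofReal)
  have hpow : ∀ m : ℕ, ENNReal.ofReal (a ^ (m : ℤ)) = ENNReal.ofReal a ^ m := fun m => by
    rw [zpow_natCast, ENNReal.ofReal_pow ha0.le]
  have hδ : ∑' k : ℤ, (∑' j : ℤ, if j ≤ k then ENNReal.ofReal (a ^ (k - j)) * I k j ^ (1 / q)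
      else 0) ^ q ≤ C * A := by
    simp only [tsum_ite_le_eq_tsum_nat, _root_.sub_sub_cancel, hpow, one_div]
    exact hC (fun k m => I k (k - m)) A fun m => by simpa [sub_eq_add_neg] using hshift (-m)
  have hη : ∑' k : ℤ, (∑' j : ℤ, if k ≤ j then ENNReal.ofReal (a ^ (j - k)) * I k j ^ (1 / q)
      else 0) ^ q ≤ C * A := by
    simp only [tsum_ite_ge_eq_tsum_nat, _root_.add_sub_cancel_left, hpow, one_div]
    exact hC (fun k m => I k (k + m)) A fun m => hshift m
  calc _ ≤ C * A + C * A := add_le_add hδ hη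
    _ = 2 * C * _ * _ := by simp only [A]; ring
end
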